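/- arXiv:2307.08330 — 2 statements merged into one kernel-verified Lean document; each statement's English description precedes it below -/
import Mathlib

section
/- Fix d ≥ 3. Represent bipartite vectors in ℂ^d ⊗ ℂ^d as d×d complex matrices, with ⟨ψ|(I ⊗ E)|φ⟩ = tr(Ψᴴ Φ Eᵀ) for a d×d matrix E. Let Φ₀ be the matrix of |00⟩ − |12⟩, let Φᵢ (1 ≤ i ≤ d−1) be the matrix of |i0⟩ − |0i⟩, and let Σ be the all-ones matrix. If a d×d complex matrix E satisfies tr(Ψᴴ Φ Eᵀ) = 0 for every pair of distinct states Ψ ≠ Φ from the set {Φ₀, Φ₁, …, Φ_{d−1}, Σ}, then E = c·I for some c ∈ ℂ. -/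
open Matrix

/-- Coefficient matrix of the basis vector `|i⟩⊗|j⟩` in `ℂ^{d₁} ⊗ ℂ^{d₂}`. -/
noncomputable def ket (d₁ d₂ : ℕ) (i j : ℕ) : Matrix (Fin d₁) (Fin d₂) ℂ :=
  fun a b => if (a : ℕ) = i ∧ (b : ℕ) = j then 1 else 0

/-- The `d+1` states of Theorem 1 in `ℂ^d ⊗ ℂ^d`: index `0` is `|00⟩ − |12⟩`,
index `i` with `1 ≤ i ≤ d−1` is `|i0⟩ − |0i⟩`, and index `d` is the stopper
state (all-ones coefficient matrix). -/
noncomputable def stateDD (d : ℕ) (i : ℕ) : Matrix (Fin d) (Fin d) ℂ :=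
  if i = 0 then ket d d 0 0 - ket d d 1 2
  else if i < d then ket d d i 0 - ket d d 0 i
  else fun _ _ => 1

/-!
With `B(X, Y) = tr(Xᴴ Y Eᵀ)`, matrix units pair as `B(e_ab, e_ce) = δ_ac E_be`, and the
all-ones matrix pairs with `e_ce` to the column sum `∑ₖ E_ke`. Orthogonality of `|i0⟩ − |0i⟩` and
`|j0⟩ − |0j⟩` gives `E_ij = 0` for distinct nonzero `i, j`. Pairing these states with
`|00⟩ − |12⟩` in both orders gives `E_0j + δ_j1 E_20 = 0` and `E_i0 + δ_i1 E_02 = 0`; taking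
index `2` first kills `E_20, E_02`, and then all of row and column `0` off the diagonal.
So `E` is diagonal, and orthogonality with the stopper makes all column sums, i.e. all diagonal
entries, equal.
-/

variable {R : Type*}

theorem ket_eq_single (m n : ℕ) (a : Fin m) (b : Fin n) : ket m n a b = single a b (1 : ℂ) := by
  ext p q
  simp [ket, single, Fin.ext_iff, eq_comm]

theorem stateDD_zero (n : ℕ) : stateDD (n + 3) 0 = single 0 0 1 - single 1 2 1 := by
  have h₀ : ket (n + 3) (n + 3) 0 0 = single 0 0 1 := ket_eq_single _ _ 0 0
  have h₁ : ket (n + 3) (n + 3) 1 2 = single 1 2 1 := ket_eq_single _ _ 1 2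
  rw [stateDD, if_pos rfl, h₀, h₁]

theorem stateDD_of_ne_zero {d : ℕ} [NeZero d] {i : Fin d} (hi : i ≠ 0) :
    stateDD d i = single i 0 1 - single 0 i 1 := by
  have h₀ : ket d d i 0 = single i 0 1 := ket_eq_single _ _ i 0
  have h₁ : ket d d 0 i = single 0 i 1 := ket_eq_single _ _ 0 i
  simp [stateDD, hi, h₀, h₁]

theorem stateDD_self (d : ℕ) : stateDD d d = of fun _ _ => 1 := by
  rcases Nat.eq_zero_or_pos d with rfl | hd
  · exact Subsingleton.elim _ _
  · simp [stateDD, hd.ne']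
    rfl

section TracePairing

variable [Semiring R] {m n : Type*} [Fintype n]

theorem trace_conjTranspose_single_mul [StarRing R] [Fintype m] [DecidableEq m] [DecidableEq n]
    (a : m) (b : n) (M : Matrix m n R) : trace ((single a b (1 : R))ᴴ * M) = M a b := by
  simp [conjTranspose_single, trace_single_mul]

theorem trace_ones_conjTranspose_mul [StarRing R] [Fintype m] (M : Matrix m n R) :
    trace ((of fun _ _ => 1 : Matrix m n R)ᴴ * M) = ∑ p, ∑ q, M p q := by
  simp only [trace, diag, mul_apply, conjTranspose_apply, of_apply, star_one, one_mul]
  exact Finset.sum_comm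

theorem single_mul_transpose_apply [DecidableEq m] [DecidableEq n] (c p : m) (e q : n)
    (E : Matrix n n R) : (single c e (1 : R) * Eᵀ) p q = if p = c then E q e else 0 := by
  by_cases h : p = c
  · subst h; simp
  · simp [h, single_mul_apply_of_ne _ _ _ _ _ h]

theorem trace_conjTranspose_single_mul_single_mul_transpose [StarRing R] [Fintype m]
    [DecidableEq m] [DecidableEq n]
    (a c : m) (b e : n) (E : Matrix n n R) :
    trace ((single a b (1 : R))ᴴ * (single c e (1 : R) * Eᵀ)) = if a = c then E b e else 0 := by
  rw [trace_conjTranspose_single_mul, single_mul_transpose_apply]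

theorem trace_ones_conjTranspose_mul_single_mul_transpose [StarRing R] [Fintype m]
    [DecidableEq m] [DecidableEq n]
    (c : m) (e : n) (E : Matrix n n R) :
    trace ((of fun _ _ => 1 : Matrix m n R)ᴴ * (single c e (1 : R) * Eᵀ)) = ∑ q, E q e := by
  simp [trace_ones_conjTranspose_mul, single_mul_transpose_apply]

end TracePairing

theorem trace_stateDD_mul_stateDD_of_ne {d : ℕ} [NeZero d] (E : Matrix (Fin d) (Fin d) ℂ)
    {i j : Fin d} (hi : i ≠ 0) (hj : j ≠ 0) (hij : i ≠ j) :
    trace ((stateDD d i)ᴴ * (stateDD d j * Eᵀ)) = E i j := by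
  simp only [stateDD_of_ne_zero hi, stateDD_of_ne_zero hj, conjTranspose_sub, sub_mul, mul_sub,
    trace_sub, trace_conjTranspose_single_mul_single_mul_transpose]
  simp [hi, hij, Ne.symm hj]

theorem trace_stateDD_zero_mul_stateDD (n : ℕ) (E : Matrix (Fin (n + 3)) (Fin (n + 3)) ℂ)
    {j : Fin (n + 3)} (hj : j ≠ 0) :
    trace ((stateDD (n + 3) 0)ᴴ * (stateDD (n + 3) j * Eᵀ)) =
      -(E 0 j + if j = 1 then E 2 0 else 0) := by
  simp only [stateDD_zero, stateDD_of_ne_zero hj, conjTranspose_sub, sub_mul, mul_sub,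
    trace_sub, trace_conjTranspose_single_mul_single_mul_transpose]
  simp [Ne.symm hj, eq_comm]
  ring

theorem trace_stateDD_mul_stateDD_zero (n : ℕ) (E : Matrix (Fin (n + 3)) (Fin (n + 3)) ℂ)
    {i : Fin (n + 3)} (hi : i ≠ 0) :
    trace ((stateDD (n + 3) i)ᴴ * (stateDD (n + 3) 0 * Eᵀ)) =
      -(E i 0 + if i = 1 then E 0 2 else 0) := by
  simp only [stateDD_zero, stateDD_of_ne_zero hi, conjTranspose_sub, sub_mul, mul_sub,
    trace_sub, trace_conjTranspose_single_mul_single_mul_transpose]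
  simp [hi]
  ring

theorem trace_stateDD_self_mul_stateDD {d : ℕ} [NeZero d] (E : Matrix (Fin d) (Fin d) ℂ)
    {j : Fin d} (hj : j ≠ 0) :
    trace ((stateDD d d)ᴴ * (stateDD d j * Eᵀ)) = ∑ k, E k 0 - ∑ k, E k j := by
  simp only [stateDD_self, stateDD_of_ne_zero hj, sub_mul, mul_sub, trace_sub,
    trace_ones_conjTranspose_mul_single_mul_transpose]

theorem isDiag_of_stateDD_relations [AddZeroClass R] {n : ℕ}
    {E : Matrix (Fin (n + 3)) (Fin (n + 3)) R}
    (hmid : ∀ i j, i ≠ 0 → j ≠ 0 → i ≠ j → E i j = 0)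
    (hrow : ∀ j, j ≠ 0 → E 0 j + (if j = 1 then E 2 0 else 0) = 0)
    (hcol : ∀ i, i ≠ 0 → E i 0 + (if i = 1 then E 0 2 else 0) = 0) :
    E.IsDiag := by
  have h₂₁ : (2 : Fin (n + 3)) ≠ 1 := by simp [Fin.ext_iff, Nat.mod_eq_of_lt]
  have h₂₀ : E 2 0 = 0 := by simpa [h₂₁] using hcol 2 two_ne_zero
  have h₀₂ : E 0 2 = 0 := by simpa [h₂₁] using hrow 2 two_ne_zero
  intro i j hij
  rcases eq_or_ne i 0 with rfl | hi
  · simpa [h₂₀] using hrow j (Ne.symm hij)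
  rcases eq_or_ne j 0 with rfl | hj
  · simpa [h₀₂] using hcol i hi
  exact hmid i j hi hj hij

theorem Matrix.IsDiag.eq_smul_one_of_sum_col_eq [Semiring R] {m : Type*} [Fintype m]
    [DecidableEq m]
    {E : Matrix m m R} (hE : E.IsDiag) (i₀ : m) (h : ∀ j, ∑ k, E k j = ∑ k, E k i₀) :
    E = E i₀ i₀ • 1 := by
  have hsum (j : m) : ∑ k, E k j = E j j :=
    Finset.sum_eq_single j (fun k _ hkj => hE hkj) (by simp)
  ext i j
  rcases eq_or_ne i j with rfl | hij
  · simpa [hsum] using h i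
  · simp [hE hij, hij]

theorem bob_trivial_dd (d : ℕ) (hd : 3 ≤ d) (E : Matrix (Fin d) (Fin d) ℂ)
    (hE : ∀ i j : ℕ, i ≤ d → j ≤ d → i ≠ j →
      Matrix.trace ((stateDD d i)ᴴ * (stateDD d j * Eᵀ)) = 0) :
    ∃ c : ℂ, E = c • (1 : Matrix (Fin d) (Fin d) ℂ) := by
  obtain ⟨n, rfl⟩ : ∃ n, d = n + 3 := ⟨d - 3, by omega⟩
  have hmid (i j : Fin (n + 3)) (hi : i ≠ 0) (hj : j ≠ 0) (hij : i ≠ j) : E i j = 0 := by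
    simpa [trace_stateDD_mul_stateDD_of_ne E hi hj hij] using
      hE i j i.is_le' j.is_le' (Fin.val_ne_of_ne hij)
  have hrow (j : Fin (n + 3)) (hj : j ≠ 0) : E 0 j + (if j = 1 then E 2 0 else 0) = 0 := by
    have := hE 0 j (by omega) j.is_le' (Ne.symm (Fin.val_ne_zero_iff.mpr hj))
    rwa [trace_stateDD_zero_mul_stateDD n E hj, neg_eq_zero] at this
  have hcol (i : Fin (n + 3)) (hi : i ≠ 0) : E i 0 + (if i = 1 then E 0 2 else 0) = 0 := by
    have := hE i 0 i.is_le' (by omega) (Fin.val_ne_zero_iff.mpr hi)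
    rwa [trace_stateDD_mul_stateDD_zero n E hi, neg_eq_zero] at this
  have hsum (j : Fin (n + 3)) : ∑ k, E k j = ∑ k, E k 0 := by
    rcases eq_or_ne j 0 with rfl | hj
    · rfl
    · have := hE (n + 3) j le_rfl j.is_le' j.isLt.ne'
      rw [trace_stateDD_self_mul_stateDD E hj, sub_eq_zero] at this
      exact this.symm
  exact ⟨E 0 0, (isDiag_of_stateDD_relations hmid hrow hcol).eq_smul_one_of_sum_col_eq 0 hsum⟩
end

section
/- Let 3 ≤ d₁ ≤ d₂ ≤ d₃ and ω = e^{2πi/3}. Let S ⊂ ℂ^{d₁} ⊗ ℂ^{d₂} ⊗ ℂ^{d₃} consist of |000⟩ − |111⟩; |i00⟩ + ω|0i0⟩ + ω²|00i⟩ for 1 ≤ i ≤ d₁−1; |0j0⟩ − |00j⟩ for d₁ ≤ j ≤ d₂−1; |00k⟩ − |2,1,(k−1)⟩ for d₂ ≤ k ≤ d₃−1; and the stopper (∑_{a<d₁}|a⟩)⊗(∑_{b<d₂}|b⟩)⊗(∑_{c<d₃}|c⟩). If a d₃×d₃ complex matrix E satisfies ⟨ψ| (I ⊗ I ⊗ E)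 |φ⟩ = 0 for all distinct ψ, φ ∈ S, then E = c·I for some c ∈ ℂ. -/
/-! Write `E` as an `ℕ × ℕ` array `m` vanishing off `[0, d₃)²`. Pairing two states of the set
with `I ⊗ I ⊗ E` only sees the blocks they share on the first two factors. For indices `k ≠ k'`
of which one is below `d₂` the only shared block is `|0 0⟩`, so `m_{k,k'} = 0`; for `k, k' ≥ d₂`
the states also share the block `|2 1⟩`, which gives `m_{k,k'} = -m_{k-1,k'-1}`, and descending
this recursion reaches an index below `d₂`. Hence `E` is diagonal. Pairing the stopper with
state `k` then equates the `k`-th column sum of `E` with the `0`-th (for `k < d₂`, using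
`1 + ω + ω² = 0` when `k < d₁`) or with the `(k-1)`-st, so all diagonal entries agree. -/

open Finset

/-- Coefficient function of the basis vector `|a⟩⊗|b⟩⊗|c⟩` in
`ℂ^{d₁} ⊗ ℂ^{d₂} ⊗ ℂ^{d₃}`. -/
noncomputable def ket3 (d₁ d₂ d₃ : ℕ) (a b c : ℕ) : Fin d₁ → Fin d₂ → Fin d₃ → ℂ :=
  fun x y z => if (x : ℕ) = a ∧ (y : ℕ) = b ∧ (z : ℕ) = c then 1 else 0

/-- The `d₃+1` states of Theorem 4 (Eq. (7)) in `ℂ^{d₁} ⊗ ℂ^{d₂} ⊗ ℂ^{d₃}`,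
with `ω = exp(2πi/3)`: index `0` is `|000⟩ − |111⟩`; `1 ≤ i ≤ d₁−1` gives
`|i00⟩ + ω|0i0⟩ + ω²|00i⟩`; `d₁ ≤ j ≤ d₂−1` gives `|0j0⟩ − |00j⟩`;
`d₂ ≤ k ≤ d₃−1` gives `|00k⟩ − |2,1,(k−1)⟩`; index `d₃` is the stopper. -/
noncomputable def stateT (d₁ d₂ d₃ : ℕ) (i : ℕ) : Fin d₁ → Fin d₂ → Fin d₃ → ℂ :=
  if i = 0 then ket3 d₁ d₂ d₃ 0 0 0 - ket3 d₁ d₂ d₃ 1 1 1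
  else if i < d₁ then
    ket3 d₁ d₂ d₃ i 0 0 + (Complex.exp (2 * Real.pi * Complex.I / 3)) • ket3 d₁ d₂ d₃ 0 i 0
      + (Complex.exp (2 * Real.pi * Complex.I / 3)) ^ 2 • ket3 d₁ d₂ d₃ 0 0 i
  else if i < d₂ then ket3 d₁ d₂ d₃ 0 i 0 - ket3 d₁ d₂ d₃ 0 0 i
  else if i < d₃ then ket3 d₁ d₂ d₃ 0 0 i - ket3 d₁ d₂ d₃ 2 1 (i - 1)
  else fun _ _ _ => 1

open Matrix

noncomputable section

variable {d₁ d₂ d₃ : ℕ} (E : Matrix (Fin d₃) (Fin d₃) ℂ)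

local notation "ω" => Complex.exp (2 * Real.pi * Complex.I / 3)

/-- `sandwich E ψ φ = ⟨ψ| (I ⊗ I ⊗ E) |φ⟩`. -/
def sandwich :
    (Fin d₁ → Fin d₂ → Fin d₃ → ℂ) →ₗ⋆[ℂ] (Fin d₁ → Fin d₂ → Fin d₃ → ℂ) →ₗ[ℂ] ℂ :=
  LinearMap.mk₂'ₛₗ (starRingEnd ℂ) (RingHom.id ℂ)
    (fun ψ φ => ∑ a, ∑ b, star (ψ a b) ⬝ᵥ E *ᵥ φ a b)
    (by intros; simp [star_add, add_dotProduct, sum_add_distrib])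
    (by intros; simp [star_smul, smul_dotProduct, mul_sum])
    (by intros; simp [mulVec_add, dotProduct_add, sum_add_distrib])
    (by intros; simp [mulVec_smul, dotProduct_smul, mul_sum])

/-- `E` extended by zero to `ℕ × ℕ`, matching the `ℕ`-labelled kets `ket3`, which vanish when a
label is out of range. -/
def natEntry (m n : ℕ) : ℂ :=
  if h : m < d₃ ∧ n < d₃ then E ⟨m, h.1⟩ ⟨n, h.2⟩ else 0

def colSum (n : ℕ) : ℂ := ∑ z : Fin d₃, natEntry E z n

lemma sum_ite_val_eq {M : Type*} [AddCommMonoid M] {d : ℕ} (n : ℕ) (f : Fin d → M) :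
    (∑ x : Fin d, if (x : ℕ) = n then f x else 0) = if h : n < d then f ⟨n, h⟩ else 0 := by
  split_ifs with h
  · rw [sum_eq_single ⟨n, h⟩] <;> simp +contextual [Fin.ext_iff]
  · exact sum_eq_zero fun x _ => if_neg fun hx : (x : ℕ) = n => h (hx ▸ x.isLt)

lemma sandwich_ket3_ket3 (a b c a' b' c' : ℕ) :
    sandwich E (ket3 d₁ d₂ d₃ a b c) (ket3 d₁ d₂ d₃ a' b' c') =
      if a = a' ∧ b = b' ∧ a < d₁ ∧ b < d₂ then natEntry E c c' else 0 := by
  unfold ket3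
  simp only [sandwich, LinearMap.mk₂'ₛₗ_apply, dotProduct, mulVec, Pi.star_apply, ite_and]
  rcases eq_or_ne a a' with rfl | ha
  · rcases eq_or_ne b b' with rfl | hb
    · simp +contextual [natEntry, sum_ite_val_eq, apply_ite (starRingEnd ℂ), ite_mul]
      split_ifs <;> first | rfl | omega
    · simp +contextual [hb, hb.symm]
  · simp +contextual [ha, ha.symm]

lemma sandwich_const_one_ket3 (a b c : ℕ) :
    sandwich E (fun _ _ _ => 1) (ket3 d₁ d₂ d₃ a b c) =
      if a < d₁ ∧ b < d₂ then colSum E c else 0 := by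
  unfold ket3
  simp [sandwich, dotProduct, mulVec, ite_and, sum_ite_val_eq, colSum, natEntry]

lemma one_add_omega_add_omega_sq : 1 + ω + ω ^ 2 = 0 := by
  simpa [sum_range_succ, add_assoc] using
    (Complex.isPrimitiveRoot_exp 3 three_ne_zero).geom_sum_eq_zero (by norm_num)

lemma natEntry_eq_zero_of_sandwich_stateT_eq_zero (hd₁ : 0 < d₁) {m n : ℕ}
    (hmn : m ≠ n) (hm : m < d₃) (hn : n < d₃) (hlow : m < d₂ ∨ n < d₂)
    (h : sandwich E (stateT d₁ d₂ d₃ m) (stateT d₁ d₂ d₃ n) = 0) : natEntry E m n = 0 := by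
  unfold stateT at h
  split_ifs at h <;> subst_vars <;> try omega
  all_goals
    simp (disch := omega) only [map_add, map_sub, map_smulₛₗ, LinearMap.add_apply,
      LinearMap.sub_apply, LinearMap.smul_apply, sandwich_ket3_ket3, if_pos, if_neg, true_and] at h
    simpa [Complex.exp_ne_zero] using h

lemma sandwich_stateT_stateT_of_d₂_le (hd₁ : 3 ≤ d₁) (hd₁₂ : d₁ ≤ d₂) {m n : ℕ}
    (hm : d₂ ≤ m) (hm' : m < d₃) (hn : d₂ ≤ n) (hn' : n < d₃) :
    sandwich E (stateT d₁ d₂ d₃ m) (stateT d₁ d₂ d₃ n) =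
      natEntry E m n + natEntry E (m - 1) (n - 1) := by
  simp (disch := omega) only [stateT, if_pos, if_neg, map_sub, LinearMap.sub_apply,
    sandwich_ket3_ket3, true_and]
  ring

lemma natEntry_eq_zero_of_ne (hd₁ : 3 ≤ d₁) (hd₁₂ : d₁ ≤ d₂)
    (hE : ∀ m n, m < d₃ → n < d₃ → m ≠ n →
      sandwich E (stateT d₁ d₂ d₃ m) (stateT d₁ d₂ d₃ n) = 0)
    {m n : ℕ} (hmn : m ≠ n) : natEntry E m n = 0 := by
  induction m using Nat.strong_induction_on generalizing n with
  | _ m ih =>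
    by_cases hin : m < d₃ ∧ n < d₃
    swap
    · exact dif_neg hin
    by_cases hlow : m < d₂ ∨ n < d₂
    · exact natEntry_eq_zero_of_sandwich_stateT_eq_zero E (by omega) hmn hin.1 hin.2 hlow
        (hE m n hin.1 hin.2 hmn)
    · have hrec := ih (m - 1) (by omega) (n := n - 1) (by omega)
      have hsum := hE m n hin.1 hin.2 hmn
      rwa [sandwich_stateT_stateT_of_d₂_le E hd₁ hd₁₂ (by omega) hin.1 (by omega) hin.2, hrec,
        add_zero] at hsum

lemma sandwich_const_one_stateT_of_lt_d₁ (hd₁₂ : d₁ ≤ d₂) {n : ℕ} (hn : 0 < n) (hn' : n < d₁) :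
    sandwich E (fun _ _ _ => 1) (stateT d₁ d₂ d₃ n) =
      colSum E 0 + ω * colSum E 0 + ω ^ 2 * colSum E n := by
  simp (disch := omega) only [stateT, if_pos, if_neg, map_add, map_smul, sandwich_const_one_ket3,
    smul_eq_mul]

lemma sandwich_const_one_stateT_of_lt_d₂ (hd₁ : 0 < d₁) {n : ℕ} (hn : d₁ ≤ n) (hn' : n < d₂) :
    sandwich E (fun _ _ _ => 1) (stateT d₁ d₂ d₃ n) = colSum E 0 - colSum E n := by
  simp (disch := omega) only [stateT, if_pos, if_neg, map_sub, sandwich_const_one_ket3]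

lemma sandwich_const_one_stateT_of_lt_d₃ (hd₁ : 3 ≤ d₁) (hd₁₂ : d₁ ≤ d₂) {n : ℕ} (hn : d₂ ≤ n)
    (hn' : n < d₃) :
    sandwich E (fun _ _ _ => 1) (stateT d₁ d₂ d₃ n) = colSum E n - colSum E (n - 1) := by
  simp (disch := omega) only [stateT, if_pos, if_neg, map_sub, sandwich_const_one_ket3]

lemma colSum_eq_colSum_zero (hd₁ : 3 ≤ d₁) (hd₁₂ : d₁ ≤ d₂)
    (hE : ∀ n, 0 < n → n < d₃ → sandwich E (fun _ _ _ => 1) (stateT d₁ d₂ d₃ n) = 0)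
    {n : ℕ} (hn : n < d₃) : colSum E n = colSum E 0 := by
  induction n with
  | zero => rfl
  | succ n ih =>
    have h := hE (n + 1) n.succ_pos hn
    rcases lt_or_ge (n + 1) d₁ with h₁ | h₁
    · rw [sandwich_const_one_stateT_of_lt_d₁ E hd₁₂ n.succ_pos h₁] at h
      have hω : ω ^ 2 * (colSum E (n + 1) - colSum E 0) = 0 := by
        linear_combination h - colSum E 0 * one_add_omega_add_omega_sq
      simpa [Complex.exp_ne_zero, sub_eq_zero] using hω
    rcases lt_or_ge (n + 1) d₂ with h₂ | h₂
    · rw [sandwich_const_one_stateT_of_lt_d₂ E (by omega) h₁ h₂] at h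
      linear_combination -h
    · rw [sandwich_const_one_stateT_of_lt_d₃ E hd₁ hd₁₂ h₂ hn, Nat.add_sub_cancel] at h
      linear_combination h + ih (by omega)

lemma natEntry_val (i j : Fin d₃) : natEntry E i j = E i j := by
  simp [natEntry]

lemma colSum_eq_natEntry_self (hoff : ∀ m n, m ≠ n → natEntry E m n = 0) (n : Fin d₃) :
    colSum E n = natEntry E n n :=
  sum_eq_single n (fun m _ hmn => hoff m n (Fin.val_injective.ne hmn)) (by simp)

lemma eq_colSum_zero_smul_one (hoff : ∀ m n, m ≠ n → natEntry E m n = 0)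
    (hcol : ∀ n < d₃, colSum E n = colSum E 0) : E = colSum E 0 • 1 := by
  ext i j
  rcases eq_or_ne i j with rfl | hij
  · rw [← natEntry_val E, ← colSum_eq_natEntry_self E hoff, hcol i i.isLt]
    simp
  · rw [← natEntry_val E, hoff i j (Fin.val_injective.ne hij)]
    simp [hij]

end

theorem charlie_trivial_T (d₁ d₂ d₃ : ℕ) (h1 : 3 ≤ d₁) (h2 : d₁ ≤ d₂) (h3 : d₂ ≤ d₃)
    (E : Matrix (Fin d₃) (Fin d₃) ℂ)
    (hE : ∀ i j : ℕ, i ≤ d₃ → j ≤ d₃ → i ≠ j →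
      ∑ a : Fin d₁, ∑ b : Fin d₂, ∑ c : Fin d₃,
        (starRingEnd ℂ) (stateT d₁ d₂ d₃ i a b c) *
          (∑ c' : Fin d₃, E c c' * stateT d₁ d₂ d₃ j a b c') = 0) :
    ∃ k : ℂ, E = k • (1 : Matrix (Fin d₃) (Fin d₃) ℂ) := by
  have hstopper : stateT d₁ d₂ d₃ d₃ = fun _ _ _ => 1 := by
    simp (disch := omega) only [stateT, if_neg]
  refine ⟨colSum E 0, eq_colSum_zero_smul_one E ?_ ?_⟩
  · exact fun m n => natEntry_eq_zero_of_ne E h1 h2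
      fun m n hm hn hmn => hE m n hm.le hn.le hmn
  · exact fun n => colSum_eq_colSum_zero E h1 h2
      fun n _ hn => hstopper ▸ hE d₃ n le_rfl hn.le hn.ne'
end
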